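/- arXiv:1503.08746 — 2 statements merged into one kernel-verified Lean document; each statement's English description precedes it below -/
import Mathlib

section
/- Let (Y,Σ,ν) be a probability space, Σ₁,…,Σ_k σ-subalgebras of Σ, and f a bounded non-negative measurable function on Y. Then ∫ f · ∏_{i=1}^k E(f | Σ_i) dν ≥ (∫ f dν)^{k+1}. -/
open MeasureTheory
open scoped MeasureTheory

namespace Stmt1Aux

lemma integrable_of_bound {Y : Type*} {m0 : MeasurableSpace Y} (ν : Measure Y)
    [IsFiniteMeasure ν] {u : Y → ℝ} (hu : AEStronglyMeasurable u ν) (B : ℝ)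
    (hB : ∀ᵐ y ∂ν, |u y| ≤ B) : Integrable u ν :=
  Integrable.mono' (integrable_const B) hu (by filter_upwards [hB] with y h; simpa using h)

lemma prod_add_le {ι : Type*} (s : Finset ι) (x : ι → ℝ) (C ε : ℝ) (hC : 0 ≤ C)
    (hε : 0 ≤ ε) (hε1 : ε ≤ 1) (hx : ∀ i, 0 ≤ x i ∧ x i ≤ C) :
    ∏ i ∈ s, (x i + ε) ≤ ∏ i ∈ s, x i + ε * s.card * (C + 1) ^ s.card := by
  induction s using Finset.cons_induction with
  | empty => simp
  | cons a s ha ih =>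
    have hC1 : (0:ℝ) ≤ C + 1 := by linarith
    have hpows : (0:ℝ) ≤ (C + 1) ^ s.card := pow_nonneg hC1 _
    have hP0 : 0 ≤ ∏ i ∈ s, x i := Finset.prod_nonneg fun i _ => (hx i).1
    have hP' : ∏ i ∈ s, (x i + ε) ≤ (C + 1) ^ s.card := by
      calc ∏ i ∈ s, (x i + ε) ≤ ∏ i ∈ s, (C + 1) :=
            Finset.prod_le_prod (fun i _ => by linarith [(hx i).1])
              (fun i _ => by linarith [(hx i).2])
        _ = (C + 1) ^ s.card := by rw [Finset.prod_const]
    rw [Finset.prod_cons, Finset.prod_cons, Finset.card_cons]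
    have hxa := hx a
    have hpow_succ : (C + 1) ^ (s.card + 1) = (C + 1) * (C + 1) ^ s.card := by ring
    push_cast
    have h1' := mul_le_mul_of_nonneg_left ih hxa.1
    rw [mul_add] at h1'
    have h2 : x a * (ε * s.card * (C + 1) ^ s.card) ≤ C * (ε * s.card * (C + 1) ^ s.card) :=
      mul_le_mul_of_nonneg_right hxa.2 (by positivity)
    have h3 : ε * ∏ i ∈ s, (x i + ε) ≤ ε * (C + 1) ^ s.card :=
      mul_le_mul_of_nonneg_left hP' hε
    have h4 : C * (ε * s.card * (C + 1) ^ s.card) + ε * (C + 1) ^ s.card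
        ≤ ε * (s.card + 1) * (C + 1) ^ (s.card + 1) := by
      rw [hpow_succ]
      nlinarith [mul_nonneg (mul_nonneg hε (Nat.cast_nonneg s.card)) hpows,
        mul_nonneg (mul_nonneg hε hC) hpows, mul_nonneg hε hpows,
        mul_nonneg (mul_nonneg (mul_nonneg hε (Nat.cast_nonneg s.card)) hC) hpows]
    nlinarith [h1', h2, h3, h4]

lemma core {Y : Type*} {m0 : MeasurableSpace Y} (ν : Measure Y) [IsProbabilityMeasure ν]
    (k : ℕ) (m : Fin k → MeasurableSpace Y) (hm : ∀ i, m i ≤ m0)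
    (f : Y → ℝ) (hf : Measurable f) (hf0 : ∀ y, 0 ≤ f y)
    (C : ℝ) (hfC : ∀ y, f y ≤ C) (hf1 : ∫ y, f y ∂ν = 1) :
    1 ≤ ∫ y, f y * ∏ i : Fin k, (ν[f | m i]) y ∂ν := by
  have hfi : Integrable f ν :=
    integrable_of_bound ν hf.aestronglyMeasurable C
      (ae_of_all _ fun y => by rw [abs_of_nonneg (hf0 y)]; exact hfC y)
  have hC1 : (1:ℝ) ≤ C := by
    calc (1:ℝ) = ∫ y, f y ∂ν := hf1.symm
      _ ≤ ∫ _y, C ∂ν := integral_mono hfi (integrable_const C) hfC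
      _ = C := by simp
  have hC0 : (0:ℝ) ≤ C := by linarith
  set g : Fin k → Y → ℝ := fun i => ν[f | m i] with hg_def
  have hgmeas : ∀ i, Measurable (g i) := fun i =>
    (stronglyMeasurable_condExp.mono (hm i)).measurable
  have hgint : ∀ i, Integrable (g i) ν := fun i => integrable_condExp
  have hgmean : ∀ i, ∫ y, g i y ∂ν = 1 := fun i => (integral_condExp (hm i)).trans hf1
  have hae : ∀ᵐ y ∂ν, ∀ i, 0 ≤ g i y ∧ g i y ≤ C := by
    rw [ae_all_iff]
    intro i
    have h1 : 0 ≤ᵐ[ν] g i := condExp_nonneg (ae_of_all _ hf0)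
    have h2 : g i ≤ᵐ[ν] fun _ => C := by
      have := condExp_mono (m := m i) hfi (integrable_const C) (ae_of_all _ hfC)
      rwa [condExp_const (hm i)] at this
    filter_upwards [h1, h2] with y hy1 hy2
    exact ⟨hy1, hy2⟩
  -- integrability of f * ∏ g and related products
  have hprod_meas : Measurable fun y => ∏ i : Fin k, g i y :=
    Finset.measurable_prod _ fun i _ => hgmeas i
  have hfprod_int : Integrable (fun y => f y * ∏ i : Fin k, g i y) ν := by
    refine integrable_of_bound ν (hf.mul hprod_meas).aestronglyMeasurable (C * (C + 1) ^ k) ?_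
    filter_upwards [hae] with y hy
    have h0 : 0 ≤ ∏ i : Fin k, g i y := Finset.prod_nonneg fun i _ => (hy i).1
    have h1 : ∏ i : Fin k, g i y ≤ (C + 1) ^ k := by
      calc ∏ i : Fin k, g i y ≤ ∏ _i : Fin k, (C + 1) :=
            Finset.prod_le_prod (fun i _ => (hy i).1) (fun i _ => by linarith [(hy i).2])
        _ = (C + 1) ^ k := by simp
    rw [abs_of_nonneg (mul_nonneg (hf0 y) h0)]
    exact mul_le_mul (hfC y) h1 h0 hC0
  -- the ε-approximation step
  have key : ∀ ε : ℝ, 0 < ε → ε ≤ 1 →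
      1 - ε * (k * (C + 1) + k * (C + 1) ^ k) ≤ ∫ y, f y * ∏ i : Fin k, g i y ∂ν := by
    intro ε hε hε1
    set h : Fin k → Y → ℝ := fun i y => Real.log (g i y + ε) with hh_def
    have hhmeas : ∀ i, Measurable (h i) := fun i => ((hgmeas i).add measurable_const).log
    set B : ℝ := |Real.log ε| + Real.log (C + ε) with hB_def
    have hlogC0 : 0 ≤ Real.log (C + ε) := Real.log_nonneg (by linarith)
    have hB0 : 0 ≤ B := by positivity
    have hhbound : ∀ᵐ y ∂ν, ∀ i, |h i y| ≤ B := by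
      filter_upwards [hae] with y hy i
      have h1 : Real.log ε ≤ h i y := Real.log_le_log hε (by linarith [(hy i).1])
      have h2 : h i y ≤ Real.log (C + ε) :=
        Real.log_le_log (by linarith [(hy i).1]) (by linarith [(hy i).2])
      rw [abs_le]
      constructor
      · have := neg_abs_le (Real.log ε)
        simp only [hB_def]; linarith
      · simp only [hB_def]; linarith [abs_nonneg (Real.log ε)]
    have hfh_int : ∀ i, Integrable (h i * f) ν := by
      intro i
      refine integrable_of_bound ν ((hhmeas i).mul hf).aestronglyMeasurable (B * C) ?_
      filter_upwards [hhbound] with y hy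
      rw [Pi.mul_apply, abs_mul, abs_of_nonneg (hf0 y)]
      exact mul_le_mul (hy i) (hfC y) (hf0 y) hB0
    have hgh_int : ∀ i, Integrable (fun y => h i y * g i y) ν := by
      intro i
      refine integrable_of_bound ν ((hhmeas i).mul (hgmeas i)).aestronglyMeasurable (B * C) ?_
      filter_upwards [hhbound, hae] with y hy hy2
      rw [abs_mul, abs_of_nonneg (hy2 i).1]
      exact mul_le_mul (hy i) (hy2 i).2 (hy2 i).1 hB0
    -- Step A : ∫ f * h i ≥ -(ε * (C+1))
    have stepA : ∀ i, -(ε * (C + 1)) ≤ ∫ y, h i y * f y ∂ν := by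
      intro i
      have hhm : StronglyMeasurable[m i] (h i) := by
        have : Measurable[m i] (h i) :=
          Measurable.log (Measurable.add stronglyMeasurable_condExp.measurable measurable_const)
        exact this.stronglyMeasurable
      have A1 : ∫ y, h i y * f y ∂ν = ∫ y, h i y * g i y ∂ν := by
        calc ∫ y, h i y * f y ∂ν = ∫ y, (ν[h i * f | m i]) y ∂ν :=
              (integral_condExp (hm i) (f := h i * f)).symm
          _ = ∫ y, h i y * g i y ∂ν := by
              refine integral_congr_ae ?_
              filter_upwards [condExp_mul_of_stronglyMeasurable_left hhm (hfh_int i) hfi] with y hy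
              simpa using hy
      rw [A1]
      have A2 : ∫ y, (g i y + (ε - 1 - ε * Real.log (C + ε))) ∂ν ≤ ∫ y, h i y * g i y ∂ν := by
        refine integral_mono_ae ((hgint i).add (integrable_const _)) (hgh_int i) ?_
        filter_upwards [hae] with y hy
        set x := g i y with hx_def
        have hx0 : 0 ≤ x := (hy i).1
        have hxC : x ≤ C := (hy i).2
        have ht : 0 < x + ε := by linarith
        have h1 : 1 - (x + ε)⁻¹ ≤ Real.log (x + ε) := Real.one_sub_inv_le_log_of_pos ht
        have h2 : x + ε - 1 ≤ (x + ε) * Real.log (x + ε) := by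
          nlinarith [mul_le_mul_of_nonneg_left h1 ht.le, mul_inv_cancel₀ (ne_of_gt ht)]
        have h3 : Real.log (x + ε) ≤ Real.log (C + ε) := Real.log_le_log ht (by linarith)
        have h4 : ε * Real.log (x + ε) ≤ ε * Real.log (C + ε) :=
          mul_le_mul_of_nonneg_left h3 hε.le
        have : h i y * x = (x + ε) * Real.log (x + ε) - ε * Real.log (x + ε) := by
          simp only [hh_def]; ring
        rw [this]
        linarith
      have A3 : ∫ y, (g i y + (ε - 1 - ε * Real.log (C + ε))) ∂ν
          = ε - ε * Real.log (C + ε) := by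
        rw [integral_add (hgint i) (integrable_const _), hgmean i, integral_const]
        simp; ring
      have hlogle : Real.log (C + ε) ≤ C + 1 := by
        calc Real.log (C + ε) ≤ C + ε := Real.log_le_self (by linarith)
          _ ≤ C + 1 := by linarith
      nlinarith [mul_le_mul_of_nonneg_left hlogle hε.le]
    -- Step B : sum over i
    set a : ℝ := ∫ y, f y * ∑ i : Fin k, h i y ∂ν with ha_def
    have hfhsum_int : Integrable (fun y => f y * ∑ i : Fin k, h i y) ν := by
      have : (fun y => f y * ∑ i : Fin k, h i y)
          = fun y => ∑ i : Fin k, (h i * f) y := by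
        funext y; rw [Finset.mul_sum]; exact Finset.sum_congr rfl fun i _ => by
          simp [mul_comm]
      rw [this]
      exact integrable_finset_sum _ fun i _ => hfh_int i
    have stepB : -(k * (ε * (C + 1))) ≤ a := by
      have ha_sum : a = ∑ i : Fin k, ∫ y, h i y * f y ∂ν := by
        calc a = ∫ y, ∑ i : Fin k, h i y * f y ∂ν := by
              refine integral_congr_ae (ae_of_all _ fun y => ?_)
              show f y * ∑ i : Fin k, h i y = ∑ i : Fin k, h i y * f y
              rw [Finset.mul_sum]
              exact Finset.sum_congr rfl fun i _ => mul_comm _ _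
          _ = ∑ i : Fin k, ∫ y, h i y * f y ∂ν :=
              integral_finset_sum _ fun i _ => hfh_int i
      rw [ha_sum]
      calc -(k * (ε * (C + 1))) = ∑ _i : Fin k, -(ε * (C + 1)) := by
            rw [Finset.sum_const, Finset.card_univ, Fintype.card_fin, nsmul_eq_mul]
            ring
        _ ≤ ∑ i : Fin k, ∫ y, h i y * f y ∂ν := Finset.sum_le_sum fun i _ => stepA i
    -- Step C : Jensen via tangent line of exp
    have hfprodε_meas : Measurable fun y => f y * ∏ i : Fin k, (g i y + ε) :=
      hf.mul (Finset.measurable_prod _ fun i _ => (hgmeas i).add measurable_const)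
    have hprodε_bound : ∀ᵐ y ∂ν, (0 ≤ ∏ i : Fin k, (g i y + ε)
        ∧ ∏ i : Fin k, (g i y + ε) ≤ (C + 1) ^ k) := by
      filter_upwards [hae] with y hy
      constructor
      · exact Finset.prod_nonneg fun i _ => by linarith [(hy i).1]
      · calc ∏ i : Fin k, (g i y + ε) ≤ ∏ _i : Fin k, (C + 1) :=
              Finset.prod_le_prod (fun i _ => by linarith [(hy i).1])
                (fun i _ => by linarith [(hy i).2])
          _ = (C + 1) ^ k := by simp
    have hfprodε_int : Integrable (fun y => f y * ∏ i : Fin k, (g i y + ε)) ν := by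
      refine integrable_of_bound ν hfprodε_meas.aestronglyMeasurable (C * (C + 1) ^ k) ?_
      filter_upwards [hprodε_bound] with y hy
      rw [abs_of_nonneg (mul_nonneg (hf0 y) hy.1)]
      exact mul_le_mul (hfC y) hy.2 hy.1 hC0
    have stepC : Real.exp a ≤ ∫ y, f y * ∏ i : Fin k, (g i y + ε) ∂ν := by
      have pointwise : ∀ᵐ y ∂ν,
          Real.exp a * (f y + f y * ∑ i : Fin k, h i y - a * f y)
            ≤ f y * ∏ i : Fin k, (g i y + ε) := by
        filter_upwards [hae] with y hy
        have hexp : Real.exp (∑ i : Fin k, h i y) = ∏ i : Fin k, (g i y + ε) := by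
          rw [Real.exp_sum]
          exact Finset.prod_congr rfl fun i _ =>
            Real.exp_log (by linarith [(hy i).1])
        have htan : Real.exp a * (1 + (∑ i : Fin k, h i y - a))
            ≤ Real.exp (∑ i : Fin k, h i y) := by
          calc Real.exp a * (1 + (∑ i : Fin k, h i y - a))
              ≤ Real.exp a * Real.exp (∑ i : Fin k, h i y - a) := by
                refine mul_le_mul_of_nonneg_left ?_ (Real.exp_nonneg a)
                linarith [Real.add_one_le_exp (∑ i : Fin k, h i y - a)]
            _ = Real.exp (∑ i : Fin k, h i y) := by rw [← Real.exp_add]; ring_nf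
        have := mul_le_mul_of_nonneg_left (hexp ▸ htan) (hf0 y)
        calc Real.exp a * (f y + f y * ∑ i : Fin k, h i y - a * f y)
            = f y * (Real.exp a * (1 + (∑ i : Fin k, h i y - a))) := by ring
          _ ≤ f y * ∏ i : Fin k, (g i y + ε) := this
      have hint1 : Integrable
          (fun y => Real.exp a * (f y + f y * ∑ i : Fin k, h i y - a * f y)) ν := by
        refine (Integrable.sub (hfi.add hfhsum_int) (hfi.const_mul a)).const_mul _
      have := integral_mono_ae hint1 hfprodε_int pointwise
      have hI1 : Integrable (fun y => f y + f y * ∑ i : Fin k, h i y) ν :=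
        hfi.add hfhsum_int
      have hI2 : Integrable (fun y => a * f y) ν := hfi.const_mul a
      calc Real.exp a
          = ∫ y, Real.exp a * (f y + f y * ∑ i : Fin k, h i y - a * f y) ∂ν := by
            rw [integral_const_mul, integral_sub hI1 hI2,
              integral_add hfi hfhsum_int, integral_const_mul, hf1, ← ha_def]
            ring
        _ ≤ _ := this
    -- Step D : remove the ε from the product
    have stepD : ∫ y, f y * ∏ i : Fin k, (g i y + ε) ∂ν
        ≤ (∫ y, f y * ∏ i : Fin k, g i y ∂ν) + ε * k * (C + 1) ^ k := by
      have pointwise : ∀ᵐ y ∂ν, f y * ∏ i : Fin k, (g i y + ε)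
          ≤ f y * ∏ i : Fin k, g i y + (ε * k * (C + 1) ^ k) * f y := by
        filter_upwards [hae] with y hy
        have hprod := prod_add_le Finset.univ (fun i => g i y) C ε hC0 hε.le hε1 hy
        simp only [Finset.card_univ, Fintype.card_fin] at hprod
        have := mul_le_mul_of_nonneg_left hprod (hf0 y)
        nlinarith [hf0 y]
      have hint2 : Integrable
          (fun y => f y * ∏ i : Fin k, g i y + (ε * k * (C + 1) ^ k) * f y) ν :=
        hfprod_int.add (hfi.const_mul _)
      have := integral_mono_ae hfprodε_int hint2 pointwise
      calc ∫ y, f y * ∏ i : Fin k, (g i y + ε) ∂ν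
          ≤ ∫ y, (f y * ∏ i : Fin k, g i y + (ε * k * (C + 1) ^ k) * f y) ∂ν := this
        _ = (∫ y, f y * ∏ i : Fin k, g i y ∂ν) + ε * k * (C + 1) ^ k := by
            rw [integral_add hfprod_int (hfi.const_mul _), integral_const_mul, hf1, mul_one]
    -- combine
    have hexp_ge : 1 - k * (ε * (C + 1)) ≤ Real.exp a := by
      calc 1 - k * (ε * (C + 1)) = -(k * (ε * (C + 1))) + 1 := by ring
        _ ≤ a + 1 := by linarith [stepB]
        _ ≤ Real.exp a := Real.add_one_le_exp a
    have := le_trans hexp_ge (le_trans stepC stepD)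
    nlinarith [this]
  -- take ε → 0
  set X : ℝ := ∫ y, f y * ∏ i : Fin k, g i y ∂ν with hX_def
  set D : ℝ := k * (C + 1) + k * (C + 1) ^ k with hD_def
  have hD0 : 0 ≤ D := by positivity
  by_contra hcon
  push_neg at hcon
  have h1X : 0 < 1 - X := by linarith
  set ε : ℝ := min 1 ((1 - X) / (D + 1)) with hε_def
  have hεpos : 0 < ε := lt_min one_pos (div_pos h1X (by linarith))
  have hε1 : ε ≤ 1 := min_le_left _ _
  have hεD : ε ≤ (1 - X) / (D + 1) := min_le_right _ _
  have hkey := key ε hεpos hε1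
  have h2 : ε * D ≤ ((1 - X) / (D + 1)) * D := mul_le_mul_of_nonneg_right hεD hD0
  have h3 : ((1 - X) / (D + 1)) * (D + 1) = 1 - X := div_mul_cancel₀ _ (by linarith)
  nlinarith [div_pos h1X (show (0:ℝ) < D + 1 by linarith)]

end Stmt1Aux

/-- Let `(Y, Σ, ν)` be a probability space, `Σ₁, …, Σ_k` σ-subalgebras
of `Σ`, and `f` a bounded non-negative measurable function on `Y`.  Then
`∫ f · ∏_{i=1}^k E(f | Σᵢ) dν ≥ (∫ f dν)^(k+1)`. -/
theorem stmt1 {Y : Type*} {m0 : MeasurableSpace Y} (ν : Measure Y) [IsProbabilityMeasure ν]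
    (k : ℕ) (m : Fin k → MeasurableSpace Y) (hm : ∀ i, m i ≤ m0)
    (f : Y → ℝ) (hf : Measurable f) (hf0 : ∀ y, 0 ≤ f y)
    (C : ℝ) (hfC : ∀ y, f y ≤ C) :
    (∫ y, f y ∂ν) ^ (k + 1) ≤ ∫ y, f y * ∏ i : Fin k, (ν[f | m i]) y ∂ν := by
  set t : ℝ := ∫ y, f y ∂ν with ht_def
  have ht0 : 0 ≤ t := integral_nonneg hf0
  rcases ht0.eq_or_lt with h0 | htpos
  · -- t = 0
    rw [← h0, zero_pow (Nat.succ_ne_zero k)]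
    refine integral_nonneg_of_ae ?_
    have hae : ∀ᵐ y ∂ν, ∀ i, 0 ≤ (ν[f | m i]) y := by
      rw [ae_all_iff]; exact fun i => condExp_nonneg (ae_of_all _ hf0)
    filter_upwards [hae] with y hy
    exact mul_nonneg (hf0 y) (Finset.prod_nonneg fun i _ => hy i)
  · -- t > 0
    set f' : Y → ℝ := t⁻¹ • f with hf'_def
    have hf'_apply : ∀ y, f' y = t⁻¹ * f y := fun y => rfl
    have hf'meas : Measurable f' := hf.const_smul t⁻¹
    have htinv0 : 0 ≤ t⁻¹ := inv_nonneg.2 ht0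
    have hf'0 : ∀ y, 0 ≤ f' y := fun y => mul_nonneg htinv0 (hf0 y)
    have hf'C : ∀ y, f' y ≤ t⁻¹ * C := fun y => mul_le_mul_of_nonneg_left (hfC y) htinv0
    have hfi : Integrable f ν :=
      Stmt1Aux.integrable_of_bound ν hf.aestronglyMeasurable C
        (ae_of_all _ fun y => by rw [abs_of_nonneg (hf0 y)]; exact hfC y)
    have hf'1 : ∫ y, f' y ∂ν = 1 := by
      simp only [hf'_apply]
      rw [integral_const_mul, ← ht_def, inv_mul_cancel₀ (ne_of_gt htpos)]
    have hcore := Stmt1Aux.core ν k m hm f' hf'meas hf'0 (t⁻¹ * C) hf'C hf'1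
    have haeg : ∀ᵐ y ∂ν, ∀ i, (ν[f' | m i]) y = t⁻¹ * (ν[f | m i]) y := by
      rw [ae_all_iff]
      intro i
      filter_upwards [condExp_smul (m := m i) (μ := ν) t⁻¹ f] with y hy
      simpa using hy
    have hrw : ∫ y, f' y * ∏ i : Fin k, (ν[f' | m i]) y ∂ν
        = (t⁻¹) ^ (k + 1) * ∫ y, f y * ∏ i : Fin k, (ν[f | m i]) y ∂ν := by
      rw [← integral_const_mul]
      refine integral_congr_ae ?_
      filter_upwards [haeg] with y hy
      rw [hf'_apply]
      have : ∏ i : Fin k, (ν[f' | m i]) y = ∏ i : Fin k, (t⁻¹ * (ν[f | m i]) y) :=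
        Finset.prod_congr rfl fun i _ => hy i
      rw [this, Finset.prod_mul_distrib, Finset.prod_const]
      simp [Finset.card_univ]
      ring
    rw [hrw] at hcore
    have htpow : 0 < t ^ (k + 1) := pow_pos htpos _
    rw [inv_pow] at hcore
    calc t ^ (k + 1) = t ^ (k + 1) * 1 := by ring
      _ ≤ t ^ (k + 1) * ((t ^ (k + 1))⁻¹ * ∫ y, f y * ∏ i : Fin k, (ν[f | m i]) y ∂ν) :=
          mul_le_mul_of_nonneg_left hcore htpow.le
      _ = ∫ y, f y * ∏ i : Fin k, (ν[f | m i]) y ∂ν := by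
          rw [← mul_assoc, mul_inv_cancel₀ (ne_of_gt htpow), one_mul]
end

section
/- Let V be a real Hilbert space and let v, u¹, …, u^m be unit vectors in V with |⟨u^i, u^j⟩| ≤ 1/m² whenever i ≠ j. Then Σ_{i=1}^m ⟨v, u^i⟩² ≤ 2. -/
/-!
Put `cᵢ = ⟨v, uⁱ⟩`, `S = ∑ cᵢ²` and `w = ∑ cᵢ uⁱ`. Then `S = ⟨v, w⟩ ≤ ‖w‖`, so `S² ≤ ‖w‖²`.
Expanding `‖w‖²`, the diagonal contributes `S` and the off-diagonal terms at most
`(∑ |cᵢ|)² / m² ≤ S / m` by Cauchy–Schwarz, so `‖w‖² ≤ 2 S` and hence `S ≤ 2`.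
-/

open Finset RealInnerProductSpace

section AlmostOrthonormal

variable {ι V : Type*} [Fintype ι] [NormedAddCommGroup V] [InnerProductSpace ℝ V]

theorem norm_sum_smul_sq_eq_sum_sum_inner (u : ι → V) (c : ι → ℝ) :
    ‖∑ i, c i • u i‖ ^ 2 = ∑ i, ∑ j, c i * c j * ⟪u i, u j⟫ := by
  rw [← real_inner_self_eq_norm_sq, sum_inner]
  simp only [inner_sum, real_inner_smul_left, real_inner_smul_right, mul_assoc]
  exact sum_congr rfl fun i _ => sum_congr rfl fun j _ => mul_left_comm _ _ _

theorem norm_sum_smul_sq_le_of_abs_inner_le {u : ι → V} {ε : ℝ}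
    (hu : ∀ i, ‖u i‖ = 1) (hε : 0 ≤ ε) (horth : ∀ i j, i ≠ j → |⟪u i, u j⟫| ≤ ε)
    (c : ι → ℝ) :
    ‖∑ i, c i • u i‖ ^ 2 ≤ ∑ i, c i ^ 2 + ε * (∑ i, |c i|) ^ 2 := by
  classical
  have hterm : ∀ i j, c i * c j * ⟪u i, u j⟫ ≤
      (if i = j then c i ^ 2 else 0) + ε * (|c i| * |c j|) := by
    intro i j
    by_cases hij : i = j
    · subst hij
      rw [real_inner_self_eq_norm_sq, hu, if_pos rfl]
      nlinarith [mul_nonneg hε (mul_nonneg (abs_nonneg (c i)) (abs_nonneg (c i)))]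
    · rw [if_neg hij, zero_add]
      calc c i * c j * ⟪u i, u j⟫ ≤ |c i| * |c j| * |⟪u i, u j⟫| := by
            rw [← abs_mul, ← abs_mul]; exact le_abs_self _
        _ ≤ |c i| * |c j| * ε := by gcongr; exact horth i j hij
        _ = ε * (|c i| * |c j|) := mul_comm _ _
  calc ‖∑ i, c i • u i‖ ^ 2
      ≤ ∑ i, ∑ j, ((if i = j then c i ^ 2 else 0) + ε * (|c i| * |c j|)) := by
        rw [norm_sum_smul_sq_eq_sum_sum_inner]
        exact sum_le_sum fun i _ => sum_le_sum fun j _ => hterm i j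
    _ = ∑ i, c i ^ 2 + ε * (∑ i, |c i|) ^ 2 := by
        simp only [sum_add_distrib, sum_ite_eq, mem_univ, if_true, ← mul_sum, sq,
          sum_mul_sum]

theorem sq_sum_abs_div_card_sq_le_sum_sq (c : ι → ℝ) :
    (∑ i, |c i|) ^ 2 / (Fintype.card ι : ℝ) ^ 2 ≤ ∑ i, c i ^ 2 := by
  have hcs : (∑ i, |c i|) ^ 2 ≤ Fintype.card ι * ∑ i, c i ^ 2 := by
    simpa only [sq_abs, card_univ] using
      sq_sum_le_card_mul_sum_sq (s := univ) (f := fun i => |c i|)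
  have hS : 0 ≤ ∑ i, c i ^ 2 := sum_nonneg fun i _ => sq_nonneg _
  rcases Nat.eq_zero_or_pos (Fintype.card ι) with h0 | hpos
  · simp [h0, hS]
  · have hcard : (1 : ℝ) ≤ Fintype.card ι := by exact_mod_cast hpos
    rw [div_le_iff₀ (by positivity)]
    nlinarith

/-- Bessel's inequality for a family with upper Riesz bound `B`. -/
theorem sum_inner_sq_le_of_norm_sum_smul_sq_le (u : ι → V) {B : ℝ} (hB0 : 0 ≤ B)
    (hB : ∀ c : ι → ℝ, ‖∑ i, c i • u i‖ ^ 2 ≤ B * ∑ i, c i ^ 2) (v : V) :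
    ∑ i, ⟪v, u i⟫ ^ 2 ≤ B * ‖v‖ ^ 2 := by
  set c : ι → ℝ := fun i => ⟪v, u i⟫
  set S := ∑ i, c i ^ 2
  have hS : 0 ≤ S := sum_nonneg fun i _ => sq_nonneg _
  have hvw : ⟪v, ∑ i, c i • u i⟫ = S := by
    simp only [S, inner_sum, real_inner_smul_right, sq, c]
  have hSw : S ≤ ‖v‖ * ‖∑ i, c i • u i‖ := hvw ▸ real_inner_le_norm _ _
  have hSS : S ^ 2 ≤ ‖v‖ ^ 2 * (B * S) :=
    calc S ^ 2 ≤ (‖v‖ * ‖∑ i, c i • u i‖) ^ 2 := pow_le_pow_left₀ hS hSw 2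
      _ = ‖v‖ ^ 2 * ‖∑ i, c i • u i‖ ^ 2 := mul_pow _ _ _
      _ ≤ ‖v‖ ^ 2 * (B * S) := by gcongr; exact hB c
  rcases hS.eq_or_lt with h0 | hpos
  · rw [← h0]; positivity
  · nlinarith

end AlmostOrthonormal

/-- If `v, u¹, …, u^m` are unit vectors in a real Hilbert space with
`|⟨uⁱ, uʲ⟩| ≤ 1/m²` for `i ≠ j`, then `∑ i, ⟨v, uⁱ⟩² ≤ 2`. -/
theorem stmt14 {V : Type*} [NormedAddCommGroup V] [InnerProductSpace ℝ V]
    (m : ℕ) (v : V) (u : Fin m → V)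
    (hv : ‖v‖ = 1) (hu : ∀ i, ‖u i‖ = 1)
    (horth : ∀ i j, i ≠ j → |(inner ℝ (u i) (u j) : ℝ)| ≤ 1 / (m : ℝ) ^ 2) :
    ∑ i : Fin m, (inner ℝ v (u i) : ℝ) ^ 2 ≤ 2 := by
  have hB : ∀ c : Fin m → ℝ, ‖∑ i, c i • u i‖ ^ 2 ≤ 2 * ∑ i, c i ^ 2 := fun c =>
    calc ‖∑ i, c i • u i‖ ^ 2 ≤ ∑ i, c i ^ 2 + 1 / (m : ℝ) ^ 2 * (∑ i, |c i|) ^ 2 :=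
          norm_sum_smul_sq_le_of_abs_inner_le hu (by positivity) horth c
      _ = ∑ i, c i ^ 2 + (∑ i, |c i|) ^ 2 / (Fintype.card (Fin m) : ℝ) ^ 2 := by
          rw [Fintype.card_fin, one_div_mul_eq_div]
      _ ≤ 2 * ∑ i, c i ^ 2 := by linarith [sq_sum_abs_div_card_sq_le_sum_sq c]
  simpa only [hv, one_pow, mul_one] using sum_inner_sq_le_of_norm_sum_smul_sq_le u zero_le_two hB v
end
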